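/- Let Ψ be an HSOQLS(hⁿ) (a partitioned incomplete quantum Latin square on ℂ^{hn} with diagonal holes V₁,...,V_n of dimension h that is orthogonal to its conjugate transpose) and let Φ¹, Φ² be a pair of orthogonal quantum Latin squares of dimension m. Define Φ_{(i,l),(j,k)} = Ψ_{i,j} ⊗ Φ¹_{l,k} if i ≤ j and Φ_{(i,l),(j,k)} = Ψ_{i,j} ⊗ conj(Φ²_{k,l}) if i > j. Then Φ is an HSOQLS((hm)ⁿ) with holes V_s ⊗ ℂ^m. -/

import Mathlib

noncomputable section

/-- The inner product on a complex inner product space, as a function into `ℂ`. -/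
def ip {E : Type*} [NormedAddCommGroup E] [InnerProductSpace ℂ E] (x y : E) : ℂ :=
  inner ℂ x y

/-- Concrete tensor product `ℂ^a ⊗ ℂ^b ≃ ℂ^(a × b)` of two vectors. -/
def tens {a b : Type*} [Fintype a] [Fintype b] (u : EuclideanSpace ℂ a)
    (v : EuclideanSpace ℂ b) : EuclideanSpace ℂ (a × b) :=
  WithLp.toLp 2 (fun p => u p.1 * v p.2)

/-- Entrywise complex conjugation of a vector (in the standard basis). -/
def conjE {ι : Type*} [Fintype ι] (v : EuclideanSpace ℂ ι) : EuclideanSpace ℂ ι :=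
  WithLp.toLp 2 (fun k => star (v k))

/-- The hole subspace `V_s` of `ℂ^{[n] × α}`: the span of the standard basis vectors
indexed by `{s} × α`. A partitioned incomplete quantum Latin square of type `|α|ⁿ` has
rows and columns indexed by `Fin n × α`, the hole `V_s` corresponding to indices
with first component `s`. -/
def holeSub (n : ℕ) (α : Type*) [Fintype α] [DecidableEq α] (s : Fin n) :
    Submodule ℂ (EuclideanSpace ℂ (Fin n × α)) :=
  Submodule.span ℂ (Set.range fun x : α => EuclideanSpace.single ((s, x)) (1 : ℂ))

/-- A partitioned incomplete quantum Latin square (PIQLS) of type `|α|ⁿ` on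
`ℂ^{[n] × α}`, with holes `V_1, …, V_n` on the diagonal: the cells `(r, c)` with
`r.1 = c.1` are empty (unconstrained), and every row (resp. column) indexed in hole `s`
consists of vectors forming an orthonormal basis of the orthogonal complement `V_sᗮ`. -/
def IsPIQLS {n : ℕ} {α : Type*} [Fintype α] [DecidableEq α]
    (Ψ : (Fin n × α) → (Fin n × α) → EuclideanSpace ℂ (Fin n × α)) : Prop :=
  (∀ r : Fin n × α,
    Orthonormal ℂ (fun c : {c : Fin n × α // c.1 ≠ r.1} => Ψ r c) ∧
    (∀ c : Fin n × α, c.1 ≠ r.1 → Ψ r c ∈ (holeSub n α r.1)ᗮ) ∧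
    Submodule.span ℂ (Set.range fun c : {c : Fin n × α // c.1 ≠ r.1} => Ψ r c) =
      (holeSub n α r.1)ᗮ) ∧
  (∀ c : Fin n × α,
    Orthonormal ℂ (fun r : {r : Fin n × α // r.1 ≠ c.1} => Ψ r c) ∧
    (∀ r : Fin n × α, r.1 ≠ c.1 → Ψ r c ∈ (holeSub n α c.1)ᗮ) ∧
    Submodule.span ℂ (Set.range fun r : {r : Fin n × α // r.1 ≠ c.1} => Ψ (r : Fin n × α) c) =
      (holeSub n α c.1)ᗮ)

/-- The subspace `⊕_s V_s ⊗ V_s` of `ℂ^{[n]×α} ⊗ ℂ^{[n]×α}`. -/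
def bigHole (n : ℕ) (α : Type*) [Fintype α] [DecidableEq α] :
    Submodule ℂ (EuclideanSpace ℂ ((Fin n × α) × (Fin n × α))) :=
  Submodule.span ℂ (Set.range fun z : Fin n × α × α =>
    EuclideanSpace.single (((z.1, z.2.1), (z.1, z.2.2))) (1 : ℂ))

/-- Two PIQLSs with the same holes are orthogonal: the tensor products
`Ψ¹_{r,c} ⊗ Ψ²_{r,c}` over all filled cells form an orthonormal basis of
`(ℂ^D ⊗ ℂ^D) ⊖ ⊕_s (V_s ⊗ V_s)`. -/
def OrthPIQLS {n : ℕ} {α : Type*} [Fintype α] [DecidableEq α]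
    (Ψ₁ Ψ₂ : (Fin n × α) → (Fin n × α) → EuclideanSpace ℂ (Fin n × α)) : Prop :=
  Orthonormal ℂ (fun p : {q : (Fin n × α) × (Fin n × α) // q.1.1 ≠ q.2.1} =>
    tens (Ψ₁ p.1.1 p.1.2) (Ψ₂ p.1.1 p.1.2)) ∧
  (∀ p : {q : (Fin n × α) × (Fin n × α) // q.1.1 ≠ q.2.1},
    tens (Ψ₁ p.1.1 p.1.2) (Ψ₂ p.1.1 p.1.2) ∈ (bigHole n α)ᗮ) ∧
  Submodule.span ℂ (Set.range fun p : {q : (Fin n × α) × (Fin n × α) // q.1.1 ≠ q.2.1} =>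
    tens (Ψ₁ p.1.1 p.1.2) (Ψ₂ p.1.1 p.1.2)) = (bigHole n α)ᗮ

/-- A PIQLS is self-orthogonal (an HSOQLS) if the vectors `Ψ_{r,c} ⊗ conj (Ψ_{c,r})`
over all filled cells form an orthonormal basis of `(ℂ^D ⊗ ℂ^D) ⊖ ⊕_s (V_s ⊗ V_s)`. -/
def SelfOrthPIQLS {n : ℕ} {α : Type*} [Fintype α] [DecidableEq α]
    (Ψ : (Fin n × α) → (Fin n × α) → EuclideanSpace ℂ (Fin n × α)) : Prop :=
  Orthonormal ℂ (fun p : {q : (Fin n × α) × (Fin n × α) // q.1.1 ≠ q.2.1} =>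
    tens (Ψ p.1.1 p.1.2) (conjE (Ψ p.1.2 p.1.1))) ∧
  (∀ p : {q : (Fin n × α) × (Fin n × α) // q.1.1 ≠ q.2.1},
    tens (Ψ p.1.1 p.1.2) (conjE (Ψ p.1.2 p.1.1)) ∈ (bigHole n α)ᗮ) ∧
  Submodule.span ℂ (Set.range fun p : {q : (Fin n × α) × (Fin n × α) // q.1.1 ≠ q.2.1} =>
    tens (Ψ p.1.1 p.1.2) (conjE (Ψ p.1.2 p.1.1))) = (bigHole n α)ᗮ

/-- A quantum Latin square over index set `ι` with values in `E`. -/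
def IsQLSOn {ι : Type*} {E : Type*} [NormedAddCommGroup E] [InnerProductSpace ℂ E]
    (Φ : ι → ι → E) : Prop :=
  (∀ i, Orthonormal ℂ (Φ i)) ∧ (∀ j, Orthonormal ℂ (fun i => Φ i j))

/-- Orthogonality of two quantum Latin squares. -/
def OrthQLSOn {ι : Type*} [DecidableEq ι] {E : Type*} [NormedAddCommGroup E]
    [InnerProductSpace ℂ E] (Φ Ψ : ι → ι → E) : Prop :=
  ∀ i j i' j', ip (Φ i j) (Φ i' j') * ip (Ψ i j) (Ψ i' j') =
    if i = i' ∧ j = j' then 1 else 0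

/-!
Index the product square by pairs (cell of `Ψ`, cell of an `m × m` square); inner products of
its entries then factor into a `Ψ`-part and an `m`-dimensional part. In a row, entries lying in
different cells of `Ψ` are orthogonal through the `Ψ`-part, and within one cell of `Ψ` the second
factor runs through a row of `Φ¹` or a column of `conj Φ²`. For self-orthogonality, exactly one
of the cells `(i, j)`, `(j, i)` of `Ψ` is above the diagonal, so the `m`-dimensional part of
`Φ_{(i,l),(j,k)} ⊗ conj Φ_{(j,k),(i,l)}` is `Φ¹_{l,k} ⊗ Φ²_{l,k}` or the conjugate of
`Φ²_{k,l} ⊗ Φ¹_{k,l}`; orthogonality of `Φ¹` and `Φ²` makes these orthonormal. Spanning the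
required subspaces then follows by counting dimensions.
-/

open Module Submodule

section Vectors

variable {ι α κ : Type*} [Fintype ι] [Fintype α] [Fintype κ]

def tensAssoc (u : EuclideanSpace ℂ (ι × α)) (v : EuclideanSpace ℂ κ) :
    EuclideanSpace ℂ (ι × (α × κ)) :=
  WithLp.toLp 2 fun p => u (p.1, p.2.1) * v p.2.2

lemma inner_eq_sum_star_mul (u v : EuclideanSpace ℂ ι) :
    inner ℂ u v = ∑ i, star (u i) * v i := by
  simp [PiLp.inner_apply, mul_comm]

lemma inner_tens (u u' : EuclideanSpace ℂ ι) (v v' : EuclideanSpace ℂ κ) :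
    inner ℂ (tens u v) (tens u' v') = inner ℂ u u' * inner ℂ v v' := by
  simp only [inner_eq_sum_star_mul, tens, Fintype.sum_prod_type,
    Finset.sum_mul_sum, star_mul']
  exact Finset.sum_congr rfl fun i _ => Finset.sum_congr rfl fun j _ => by ring

lemma inner_tensAssoc (u u' : EuclideanSpace ℂ (ι × α)) (v v' : EuclideanSpace ℂ κ) :
    inner ℂ (tensAssoc u v) (tensAssoc u' v') = inner ℂ u u' * inner ℂ v v' := by
  rw [← inner_tens, inner_eq_sum_star_mul, inner_eq_sum_star_mul]
  exact Fintype.sum_equiv (Equiv.prodAssoc ι α κ).symm _ _ fun p => rfl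

lemma inner_conjE (u v : EuclideanSpace ℂ ι) :
    inner ℂ (conjE u) (conjE v) = star (inner ℂ u v) := by
  simp [inner_eq_sum_star_mul, conjE, mul_comm]

lemma Orthonormal.conjE {β : Type*} {v : β → EuclideanSpace ℂ ι} (hv : Orthonormal ℂ v) :
    Orthonormal ℂ fun i => _root_.conjE (v i) := by
  classical
  rw [orthonormal_iff_ite] at hv ⊢
  intro i j
  rw [inner_conjE, hv]
  split_ifs <;> simp

end Vectors

theorem orthonormal_of_inner_eq_mul {𝕜 E E₁ E₂ S I K : Type*} [RCLike 𝕜]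
    [NormedAddCommGroup E] [InnerProductSpace 𝕜 E] [NormedAddCommGroup E₁]
    [InnerProductSpace 𝕜 E₁] [NormedAddCommGroup E₂] [InnerProductSpace 𝕜 E₂]
    {F : S → E} {f : I → E₁} {g : I → K → E₂} (π : S → I) (ρ : S → K)
    (hπρ : Function.Injective fun s => (π s, ρ s))
    (hf : Orthonormal 𝕜 f) (hg : ∀ i, Orthonormal 𝕜 (g i))
    (hF : ∀ s s', inner 𝕜 (F s) (F s') =
      inner 𝕜 (f (π s)) (f (π s')) * inner 𝕜 (g (π s) (ρ s)) (g (π s') (ρ s'))) :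
    Orthonormal 𝕜 F := by
  classical
  rw [orthonormal_iff_ite]
  intro s s'
  rw [hF]
  by_cases hπ : π s = π s'
  · rw [hπ, orthonormal_iff_ite.1 hf, if_pos rfl, one_mul, orthonormal_iff_ite.1 (hg _)]
    exact if_congr ⟨fun hρ => hπρ (Prod.ext hπ hρ), fun h => h ▸ rfl⟩ rfl rfl
  · rw [hf.2 hπ, zero_mul, if_neg fun h => hπ (congrArg π h)]

lemma mem_orthogonal_span_iff {𝕜 E : Type*} [RCLike 𝕜] [NormedAddCommGroup E]
    [InnerProductSpace 𝕜 E] {S : Set E} {v : E} :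
    v ∈ (span 𝕜 S)ᗮ ↔ ∀ u ∈ S, inner 𝕜 v u = 0 := by
  rw [← span_singleton_le_iff_mem, ← isOrtho_iff_le, isOrtho_span]
  simp

lemma span_eq_of_orthonormal_of_card_eq {ι E : Type*} [Fintype ι] [NormedAddCommGroup E]
    [InnerProductSpace ℂ E] [FiniteDimensional ℂ E] {f : ι → E} {W : Submodule ℂ E}
    (hf : Orthonormal ℂ f) (hmem : ∀ i, f i ∈ W) (hcard : Fintype.card ι = finrank ℂ W) :
    span ℂ (Set.range f) = W := by
  refine eq_of_le_of_finrank_le (span_le.2 (Set.range_subset_iff.2 hmem)) ?_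
  rw [finrank_span_eq_card hf.linearIndependent, hcard]

lemma finrank_orthogonal_span_single {ι β : Type*} [Fintype ι] [DecidableEq ι] [Fintype β]
    {g : β → ι} (hg : Function.Injective g) :
    finrank ℂ (span ℂ (Set.range fun b => EuclideanSpace.single (g b) (1 : ℂ)))ᗮ =
      Fintype.card ι - Fintype.card β := by
  have hspan : finrank ℂ (span ℂ (Set.range fun b => EuclideanSpace.single (g b) (1 : ℂ))) =
      Fintype.card β :=
    finrank_span_eq_card ((EuclideanSpace.orthonormal_single (𝕜 := ℂ)).comp g hg).linearIndependent
  have hsum := finrank_add_finrank_orthogonal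
    (span ℂ (Set.range fun b => EuclideanSpace.single (g b) (1 : ℂ)))
  rw [hspan, finrank_euclideanSpace] at hsum
  omega

section Holes

variable {n : ℕ} {α : Type*} [Fintype α] [DecidableEq α]

lemma mem_orthogonal_holeSub_iff {s : Fin n} {v : EuclideanSpace ℂ (Fin n × α)} :
    v ∈ (holeSub n α s)ᗮ ↔ ∀ x, v (s, x) = 0 := by
  simp [holeSub, mem_orthogonal_span_iff, EuclideanSpace.inner_single_right]

lemma mem_orthogonal_bigHole_iff {v : EuclideanSpace ℂ ((Fin n × α) × (Fin n × α))} :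
    v ∈ (bigHole n α)ᗮ ↔ ∀ s x y, v ((s, x), (s, y)) = 0 := by
  simp [bigHole, mem_orthogonal_span_iff, forall_comm (α := EuclideanSpace ℂ _),
    EuclideanSpace.inner_single_right]

lemma card_fst_ne_eq_finrank (s : Fin n) :
    Fintype.card {c : Fin n × α // c.1 ≠ s} = finrank ℂ (holeSub n α s)ᗮ := by
  have hfiber : {c : Fin n × α // c.1 = s} ≃ α :=
    { toFun := fun c => c.1.2
      invFun := fun x => ⟨(s, x), rfl⟩
      left_inv := by rintro ⟨⟨_, _⟩, rfl⟩; rfl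
      right_inv := fun _ => rfl }
  rw [holeSub, finrank_orthogonal_span_single fun x y h => (Prod.ext_iff.1 h).2,
    Fintype.card_subtype_compl, Fintype.card_congr hfiber]

lemma card_filled_eq_finrank :
    Fintype.card {q : (Fin n × α) × (Fin n × α) // q.1.1 ≠ q.2.1} =
      finrank ℂ (bigHole n α)ᗮ := by
  have hdiag : {q : (Fin n × α) × (Fin n × α) // q.1.1 = q.2.1} ≃ Fin n × α × α :=
    { toFun := fun q => (q.1.1.1, q.1.1.2, q.1.2.2)
      invFun := fun z => ⟨((z.1, z.2.1), (z.1, z.2.2)), rfl⟩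
      left_inv := by rintro ⟨⟨⟨s, x⟩, ⟨s', y⟩⟩, h⟩; obtain rfl : s = s' := h; rfl
      right_inv := fun _ => rfl }
  rw [bigHole, finrank_orthogonal_span_single fun z z' h => ?_,
    Fintype.card_subtype_compl, Fintype.card_congr hdiag]
  simp only [Prod.ext_iff] at h ⊢
  tauto

def PIQLSRows (Ψ : (Fin n × α) → (Fin n × α) → EuclideanSpace ℂ (Fin n × α)) : Prop :=
  ∀ r : Fin n × α, Orthonormal ℂ (fun c : {c : Fin n × α // c.1 ≠ r.1} => Ψ r c) ∧
    ∀ c : Fin n × α, c.1 ≠ r.1 → Ψ r c ∈ (holeSub n α r.1)ᗮ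

lemma PIQLSRows.span_eq {Ψ : (Fin n × α) → (Fin n × α) → EuclideanSpace ℂ (Fin n × α)}
    (hΨ : PIQLSRows Ψ) (r : Fin n × α) :
    span ℂ (Set.range fun c : {c : Fin n × α // c.1 ≠ r.1} => Ψ r c) = (holeSub n α r.1)ᗮ :=
  span_eq_of_orthonormal_of_card_eq (hΨ r).1 (fun c => (hΨ r).2 c c.2)
    (card_fst_ne_eq_finrank r.1)

lemma isPIQLS_iff {Ψ : (Fin n × α) → (Fin n × α) → EuclideanSpace ℂ (Fin n × α)} :
    IsPIQLS Ψ ↔ PIQLSRows Ψ ∧ PIQLSRows fun r c => Ψ c r := by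
  refine ⟨fun h => ⟨fun r => ⟨(h.1 r).1, (h.1 r).2.1⟩, fun c => ⟨(h.2 c).1, (h.2 c).2.1⟩⟩,
    fun h => ⟨fun r => ⟨(h.1 r).1, (h.1 r).2, h.1.span_eq r⟩,
      fun c => ⟨(h.2 c).1, (h.2 c).2, h.2.span_eq c⟩⟩⟩

lemma selfOrthPIQLS_iff {Ψ : (Fin n × α) → (Fin n × α) → EuclideanSpace ℂ (Fin n × α)} :
    SelfOrthPIQLS Ψ ↔
      Orthonormal ℂ (fun p : {q : (Fin n × α) × (Fin n × α) // q.1.1 ≠ q.2.1} =>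
        tens (Ψ p.1.1 p.1.2) (conjE (Ψ p.1.2 p.1.1))) ∧
      ∀ p : {q : (Fin n × α) × (Fin n × α) // q.1.1 ≠ q.2.1},
        tens (Ψ p.1.1 p.1.2) (conjE (Ψ p.1.2 p.1.1)) ∈ (bigHole n α)ᗮ :=
  ⟨fun h => ⟨h.1, h.2.1⟩, fun h =>
    ⟨h.1, h.2, span_eq_of_orthonormal_of_card_eq h.1 h.2 card_filled_eq_finrank⟩⟩

end Holes

section Product

variable {n : ℕ} {α κ : Type*} [Fintype κ]

def cellSquare {D : Type*} (σ : D → D → Prop) [DecidableRel σ]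
    (Φ₁ Φ₂ : κ → κ → EuclideanSpace ℂ κ) (a b : D) (l k : κ) : EuclideanSpace ℂ κ :=
  if σ a b then Φ₁ l k else conjE (Φ₂ k l)

/-- The paper's `Φ_{(i,l),(j,k)}` is `productSquare σ Ψ Φ₁ Φ₂ r c` with `i = (r.1, r.2.1)`,
`l = r.2.2`, `j = (c.1, c.2.1)`, `k = c.2.2`; the order `i ≤ j` is generalised to any relation
`σ`. -/
def productSquare (σ : Fin n × α → Fin n × α → Prop) [DecidableRel σ]
    (Ψ : (Fin n × α) → (Fin n × α) → EuclideanSpace ℂ (Fin n × α))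
    (Φ₁ Φ₂ : κ → κ → EuclideanSpace ℂ κ) (r c : Fin n × (α × κ)) :
    EuclideanSpace ℂ (Fin n × (α × κ)) :=
  tensAssoc (Ψ (r.1, r.2.1) (c.1, c.2.1))
    (cellSquare σ Φ₁ Φ₂ (r.1, r.2.1) (c.1, c.2.1) r.2.2 c.2.2)

lemma productSquare_eq_ite (σ : Fin n × α → Fin n × α → Prop) [DecidableRel σ]
    (Ψ : (Fin n × α) → (Fin n × α) → EuclideanSpace ℂ (Fin n × α))
    (Φ₁ Φ₂ : κ → κ → EuclideanSpace ℂ κ) :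
    productSquare σ Ψ Φ₁ Φ₂ = fun r c =>
      if σ (r.1, r.2.1) (c.1, c.2.1) then
        WithLp.toLp 2 fun p => Ψ (r.1, r.2.1) (c.1, c.2.1) (p.1, p.2.1) * Φ₁ r.2.2 c.2.2 p.2.2
      else
        WithLp.toLp 2 fun p =>
          Ψ (r.1, r.2.1) (c.1, c.2.1) (p.1, p.2.1) * star (Φ₂ c.2.2 r.2.2 p.2.2) := by
  funext r c
  unfold productSquare cellSquare
  split_ifs <;> rfl

lemma productSquare_transpose (σ : Fin n × α → Fin n × α → Prop) [DecidableRel σ]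
    (Ψ : (Fin n × α) → (Fin n × α) → EuclideanSpace ℂ (Fin n × α))
    (Φ₁ Φ₂ : κ → κ → EuclideanSpace ℂ κ) :
    (fun r c => productSquare σ Ψ Φ₁ Φ₂ c r) =
      productSquare (fun a b => σ b a) (fun a b => Ψ b a) (fun l k => Φ₁ k l)
        (fun l k => Φ₂ k l) :=
  rfl

lemma orthonormal_cellSquare {D : Type*} (σ : D → D → Prop) [DecidableRel σ]
    {Φ₁ Φ₂ : κ → κ → EuclideanSpace ℂ κ} (hΦ₁ : ∀ l, Orthonormal ℂ (Φ₁ l))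
    (hΦ₂ : ∀ l, Orthonormal ℂ fun k => Φ₂ k l) (a b : D) (l : κ) :
    Orthonormal ℂ (cellSquare σ Φ₁ Φ₂ a b l) := by
  show Orthonormal ℂ fun k => cellSquare σ Φ₁ Φ₂ a b l k
  by_cases h : σ a b
  · simpa only [cellSquare, if_pos h] using hΦ₁ l
  · simpa only [cellSquare, if_neg h] using (hΦ₂ l).conjE

variable [DecidableEq κ]

lemma orthonormal_tens_cellSquare {D : Type*} {σ : D → D → Prop} [DecidableRel σ]
    {Φ₁ Φ₂ : κ → κ → EuclideanSpace ℂ κ} {a b : D} (hσ : σ b a ↔ ¬σ a b)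
    (hΦ : OrthQLSOn Φ₁ Φ₂) :
    Orthonormal ℂ fun p : κ × κ =>
      tens (cellSquare σ Φ₁ Φ₂ a b p.1 p.2) (conjE (cellSquare σ Φ₁ Φ₂ b a p.2 p.1)) := by
  rw [orthonormal_iff_ite]
  rintro ⟨l, k⟩ ⟨l', k'⟩
  rw [inner_tens, inner_conjE]
  by_cases h : σ a b
  · simp only [cellSquare, if_pos h, if_neg (hσ.not.2 (not_not.2 h)), inner_conjE, star_star]
    simpa only [ip, Prod.mk.injEq] using hΦ l k l' k'
  · simp only [cellSquare, if_neg h, if_pos (hσ.2 h), inner_conjE]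
    have hΦkl := hΦ k l k' l'
    rw [ip, ip] at hΦkl
    rw [← star_mul', mul_comm, hΦkl]
    split_ifs <;> simp_all [and_comm]

variable [Fintype α] [DecidableEq α]

lemma tensAssoc_mem_orthogonal_holeSub {s : Fin n} {u : EuclideanSpace ℂ (Fin n × α)}
    (hu : u ∈ (holeSub n α s)ᗮ) (v : EuclideanSpace ℂ κ) :
    tensAssoc u v ∈ (holeSub n (α × κ) s)ᗮ := by
  rw [mem_orthogonal_holeSub_iff] at hu ⊢
  rintro ⟨x, l⟩
  simp [tensAssoc, hu x]

lemma PIQLSRows.productSquare (σ : Fin n × α → Fin n × α → Prop) [DecidableRel σ]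
    {Ψ : (Fin n × α) → (Fin n × α) → EuclideanSpace ℂ (Fin n × α)}
    {Φ₁ Φ₂ : κ → κ → EuclideanSpace ℂ κ} (hΨ : PIQLSRows Ψ)
    (hΦ₁ : ∀ l, Orthonormal ℂ (Φ₁ l)) (hΦ₂ : ∀ l, Orthonormal ℂ fun k => Φ₂ k l) :
    PIQLSRows (productSquare σ Ψ Φ₁ Φ₂) := by
  intro r
  constructor
  · refine orthonormal_of_inner_eq_mul
      (f := fun b : {b : Fin n × α // b.1 ≠ r.1} => Ψ (r.1, r.2.1) b)
      (g := fun b => cellSquare σ Φ₁ Φ₂ (r.1, r.2.1) b r.2.2)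
      (fun c => ⟨(c.1.1, c.1.2.1), c.2⟩) (fun c => c.1.2.2) ?_ (hΨ (r.1, r.2.1)).1
      (fun b => orthonormal_cellSquare σ hΦ₁ hΦ₂ _ _ _) fun c c' => inner_tensAssoc _ _ _ _
    rintro ⟨⟨s, x, l⟩, _⟩ ⟨⟨s', x', l'⟩, _⟩ h
    simp_all
  · intro c hc
    exact tensAssoc_mem_orthogonal_holeSub ((hΨ (r.1, r.2.1)).2 (c.1, c.2.1) hc) _

theorem IsPIQLS.productSquare (σ : Fin n × α → Fin n × α → Prop) [DecidableRel σ]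
    {Ψ : (Fin n × α) → (Fin n × α) → EuclideanSpace ℂ (Fin n × α)}
    {Φ₁ Φ₂ : κ → κ → EuclideanSpace ℂ κ} (hΨ : IsPIQLS Ψ) (hΦ₁ : IsQLSOn Φ₁)
    (hΦ₂ : IsQLSOn Φ₂) : IsPIQLS (productSquare σ Ψ Φ₁ Φ₂) := by
  rw [isPIQLS_iff] at hΨ ⊢
  rw [productSquare_transpose]
  exact ⟨hΨ.1.productSquare σ hΦ₁.1 hΦ₂.2,
    hΨ.2.productSquare (fun a b => σ b a) hΦ₁.2 hΦ₂.1⟩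

lemma tens_tensAssoc_mem_orthogonal_bigHole {u u' : EuclideanSpace ℂ (Fin n × α)}
    (h : tens u (conjE u') ∈ (bigHole n α)ᗮ) (v v' : EuclideanSpace ℂ κ) :
    tens (tensAssoc u v) (conjE (tensAssoc u' v')) ∈ (bigHole n (α × κ))ᗮ := by
  rw [mem_orthogonal_bigHole_iff] at h ⊢
  rintro s ⟨x, l⟩ ⟨y, k⟩
  have hxy := h s x y
  simp only [tens, conjE, tensAssoc, PiLp.toLp_apply] at hxy ⊢
  rw [star_mul']
  linear_combination (v l * star (v' k)) * hxy

theorem SelfOrthPIQLS.productSquare {σ : Fin n × α → Fin n × α → Prop} [DecidableRel σ]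
    (hσ : ∀ a b : Fin n × α, a.1 ≠ b.1 → (σ b a ↔ ¬σ a b))
    {Ψ : (Fin n × α) → (Fin n × α) → EuclideanSpace ℂ (Fin n × α)}
    {Φ₁ Φ₂ : κ → κ → EuclideanSpace ℂ κ} (hΨ : SelfOrthPIQLS Ψ) (hΦ : OrthQLSOn Φ₁ Φ₂) :
    SelfOrthPIQLS (productSquare σ Ψ Φ₁ Φ₂) := by
  rw [selfOrthPIQLS_iff] at hΨ ⊢
  constructor
  · refine orthonormal_of_inner_eq_mul
      (f := fun q : {q : (Fin n × α) × (Fin n × α) // q.1.1 ≠ q.2.1} =>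
        tens (Ψ q.1.1 q.1.2) (conjE (Ψ q.1.2 q.1.1)))
      (g := fun q (p : κ × κ) => tens (cellSquare σ Φ₁ Φ₂ q.1.1 q.1.2 p.1 p.2)
        (conjE (cellSquare σ Φ₁ Φ₂ q.1.2 q.1.1 p.2 p.1)))
      (fun p => ⟨((p.1.1.1, p.1.1.2.1), (p.1.2.1, p.1.2.2.1)), p.2⟩)
      (fun p => (p.1.1.2.2, p.1.2.2.2)) ?_ hΨ.1
      (fun q => orthonormal_tens_cellSquare (σ := σ) (hσ q.1.1 q.1.2 q.2) hΦ) fun p p' => ?_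
    · rintro ⟨⟨⟨s, x, l⟩, ⟨t, y, k⟩⟩, _⟩ ⟨⟨⟨s', x', l'⟩, ⟨t', y', k'⟩⟩, _⟩ h
      simp_all
    · simp only [_root_.productSquare, inner_tens, inner_tensAssoc, inner_conjE, star_mul']
      ring
  · intro p
    exact tens_tensAssoc_mem_orthogonal_bigHole
      (hΨ.2 ⟨((p.1.1.1, p.1.1.2.1), (p.1.2.1, p.1.2.2.1)), p.2⟩) _ _

end Product

lemma val_mul_add_val_le_iff_not_le {n h : ℕ} {a b : Fin n × Fin h} (hab : a ≠ b) :
    (b.1 : ℕ) * h + b.2 ≤ a.1 * h + a.2 ↔ ¬(a.1 : ℕ) * h + a.2 ≤ b.1 * h + b.2 := by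
  have hkey : ∀ c : Fin n × Fin h, (c.1 : ℕ) * h + c.2 = finProdFinEquiv c := fun c => by
    simp only [finProdFinEquiv_apply_val]
    ring
  rw [hkey, hkey, not_le, (Fin.val_injective.ne (finProdFinEquiv.injective.ne hab.symm)).le_iff_lt]

/-- Construction of an HSOQLS of type `(hm)ⁿ` from an HSOQLS `Ψ` of type `hⁿ` and a
pair `Φ¹, Φ²` of orthogonal quantum Latin squares of dimension `m`:
`Φ_{(i,l),(j,k)} = Ψ_{i,j} ⊗ Φ¹_{l,k}` if `i ≤ j` (as row/column indices of the big
square) and `Φ_{(i,l),(j,k)} = Ψ_{i,j} ⊗ conj (Φ²_{k,l})` otherwise; the result is a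
self-orthogonal PIQLS with holes `V_s ⊗ ℂ^m`. -/
theorem hsoqls_product {n h m : ℕ}
    (Ψ : (Fin n × Fin h) → (Fin n × Fin h) → EuclideanSpace ℂ (Fin n × Fin h))
    (hΨ : IsPIQLS Ψ) (hΨself : SelfOrthPIQLS Ψ)
    (Φ₁ Φ₂ : Fin m → Fin m → EuclideanSpace ℂ (Fin m))
    (hΦ₁ : IsQLSOn Φ₁) (hΦ₂ : IsQLSOn Φ₂) (hΦo : OrthQLSOn Φ₁ Φ₂) :
    IsPIQLS (n := n) (α := Fin h × Fin m)
      (fun r c =>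
        if (r.1 : ℕ) * h + (r.2.1 : ℕ) ≤ (c.1 : ℕ) * h + (c.2.1 : ℕ) then
          WithLp.toLp 2 (fun p : Fin n × (Fin h × Fin m) =>
            Ψ (r.1, r.2.1) (c.1, c.2.1) (p.1, p.2.1) * Φ₁ r.2.2 c.2.2 p.2.2)
        else
          WithLp.toLp 2 (fun p : Fin n × (Fin h × Fin m) =>
            Ψ (r.1, r.2.1) (c.1, c.2.1) (p.1, p.2.1) *
              star (Φ₂ c.2.2 r.2.2 p.2.2))) ∧
    SelfOrthPIQLS (n := n) (α := Fin h × Fin m)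
      (fun r c =>
        if (r.1 : ℕ) * h + (r.2.1 : ℕ) ≤ (c.1 : ℕ) * h + (c.2.1 : ℕ) then
          WithLp.toLp 2 (fun p : Fin n × (Fin h × Fin m) =>
            Ψ (r.1, r.2.1) (c.1, c.2.1) (p.1, p.2.1) * Φ₁ r.2.2 c.2.2 p.2.2)
        else
          WithLp.toLp 2 (fun p : Fin n × (Fin h × Fin m) =>
            Ψ (r.1, r.2.1) (c.1, c.2.1) (p.1, p.2.1) *
              star (Φ₂ c.2.2 r.2.2 p.2.2))) := by
  simpa only [productSquare_eq_ite] using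
    (⟨hΨ.productSquare _ hΦ₁ hΦ₂, hΨself.productSquare
      (fun a b hab => val_mul_add_val_le_iff_not_le (ne_of_apply_ne Prod.fst hab)) hΦo⟩ :
      IsPIQLS (productSquare (fun a b : Fin n × Fin h => (a.1 : ℕ) * h + a.2 ≤ b.1 * h + b.2)
        Ψ Φ₁ Φ₂) ∧ SelfOrthPIQLS (productSquare _ Ψ Φ₁ Φ₂))
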